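/- arXiv:1508.05589 — 8 statements merged into one kernel-verified Lean document; each statement's English description precedes it below -/
import Mathlib

section
/- Let A be a commutative ring and let (a₁, …, aₙ) be a regular sequence in A (i.e. for each i, aᵢ is a non-zero-divisor in the quotient ring A/(a₁, …, a_{i−1})). Then every relation among the aᵢ is generated by the trivial (Koszul) relations: for any u₁, …, uₙ ∈ A with u₁a₁ + ⋯ + uₙaₙ = 0, there exists an n × n matrix M = (m_{ij}) over A with m_{ij} = −m_{ji} for all i, j and m_{ii} = 0 for all i, such that uᵢ = ∑ⱼ m_{ij} aⱼ for every i. -/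
/-- A sequence `(a 0, …, a (n-1))` in a commutative ring `A` is regular if each `a i`
is a non-zero-divisor in the quotient ring `A / (a j ; j < i)`. -/
def IsRegularSeq {A : Type*} [CommRing A] {n : ℕ} (a : Fin n → A) : Prop :=
  ∀ i : Fin n,
    Ideal.Quotient.mk (Ideal.span (a '' {j | j < i})) (a i) ∈
      nonZeroDivisors (A ⧸ Ideal.span (a '' {j | j < i}))

theorem aux_regular {A : Type*} [CommRing A] :
    ∀ (n : ℕ) (a : Fin n → A), IsRegularSeq a → ∀ u : Fin n → A, ∑ i, u i * a i = 0 →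
    ∃ M : Matrix (Fin n) (Fin n) A,
      (∀ i j, M i j = - M j i) ∧ (∀ i, M i i = 0) ∧
      ∀ i, u i = ∑ j, M i j * a j := by
  intro n
  induction n with
  | zero =>
    intro a _ u _
    exact ⟨0, fun i => i.elim0, fun i => i.elim0, fun i => i.elim0⟩
  | succ n ih =>
    intro a ha u hu
    have hset : {j : Fin (n+1) | j < Fin.last n} = Set.range Fin.castSucc := by
      ext j
      simp only [Set.mem_setOf_eq, Set.mem_range]
      constructor
      · intro h
        exact ⟨j.castPred (Fin.ne_last_of_lt h), Fin.castSucc_castPred _ _⟩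
      · rintro ⟨k, rfl⟩; exact Fin.castSucc_lt_last k
    have himg : a '' {j : Fin (n+1) | j < Fin.last n} = Set.range (fun i : Fin n => a i.castSucc) := by
      rw [hset, ← Set.range_comp]; rfl
    -- u (last n) ∈ span of earlier
    have hmem : u (Fin.last n) ∈ Ideal.span (a '' {j | j < Fin.last n}) := by
      set I := Ideal.span (a '' {j : Fin (n+1) | j < Fin.last n}) with hI
      have h1 : ∀ i : Fin n, a i.castSucc ∈ I := fun i =>
        Ideal.subset_span ⟨i.castSucc, Fin.castSucc_lt_last i, rfl⟩
      have h2 : u (Fin.last n) * a (Fin.last n) ∈ I := by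
        rw [Fin.sum_univ_castSucc] at hu
        have : u (Fin.last n) * a (Fin.last n) = -∑ i : Fin n, u i.castSucc * a i.castSucc := by
          linear_combination hu
        rw [this]
        exact neg_mem (Ideal.sum_mem I fun i _ => Ideal.mul_mem_left I _ (h1 i))
      have h3 : (Ideal.Quotient.mk I (u (Fin.last n))) * (Ideal.Quotient.mk I (a (Fin.last n))) = 0 := by
        rw [← map_mul, Ideal.Quotient.eq_zero_iff_mem]; exact h2
      have h4 := (mul_right_mem_nonZeroDivisors_eq_zero_iff (ha (Fin.last n))).mp h3
      rwa [Ideal.Quotient.eq_zero_iff_mem] at h4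
    rw [himg, Ideal.mem_span_range_iff_exists_fun] at hmem
    obtain ⟨c, hc⟩ := hmem
    -- prefix is regular
    have hpre : IsRegularSeq (fun i : Fin n => a i.castSucc) := by
      intro i
      have hst : (fun i : Fin n => a i.castSucc) '' {j | j < i} = a '' {j : Fin (n+1) | j < i.castSucc} := by
        have : Fin.castSucc '' {j : Fin n | j < i} = {j : Fin (n+1) | j < i.castSucc} := by
          ext j
          simp only [Set.mem_image, Set.mem_setOf_eq]
          constructor
          · rintro ⟨k, hk, rfl⟩; exact Fin.castSucc_lt_castSucc_iff.mpr hk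
          · intro h
            refine ⟨j.castPred (Fin.ne_last_of_lt (lt_of_lt_of_le h (Fin.castSucc_lt_last i).le)), ?_, Fin.castSucc_castPred _ _⟩
            rwa [← Fin.castSucc_lt_castSucc_iff, Fin.castSucc_castPred]
        rw [← this, ← Set.image_comp]; rfl
      have key : ∀ (S T : Set A) (x : A), S = T →
          Ideal.Quotient.mk (Ideal.span T) x ∈ nonZeroDivisors (A ⧸ Ideal.span T) →
          Ideal.Quotient.mk (Ideal.span S) x ∈ nonZeroDivisors (A ⧸ Ideal.span S) := by
        rintro S T x rfl h; exact h
      exact key _ _ _ hst (ha i.castSucc)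
    -- new relation
    set u' : Fin n → A := fun i => u i.castSucc + c i * a (Fin.last n) with hu'
    have hrel : ∑ i, u' i * a i.castSucc = 0 := by
      have : ∑ i, u' i * a i.castSucc
          = (∑ i : Fin n, u i.castSucc * a i.castSucc) + a (Fin.last n) * ∑ i, c i * a i.castSucc := by
        rw [Finset.mul_sum, ← Finset.sum_add_distrib]
        exact Finset.sum_congr rfl fun i _ => by ring
      rw [this, hc]
      rw [Fin.sum_univ_castSucc] at hu
      linear_combination hu
    obtain ⟨M', hM1, hM2, hM3⟩ := ih _ hpre u' hrel
    refine ⟨Fin.lastCases (Fin.snoc c 0) (fun i => Fin.snoc (M' i) (-(c i))), ?_, ?_, ?_⟩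
    · intro i j
      induction i using Fin.lastCases with
      | last =>
        induction j using Fin.lastCases with
        | last => simp
        | cast j => simp
      | cast i =>
        induction j using Fin.lastCases with
        | last => simp
        | cast j => simpa using hM1 i j
    · intro i
      induction i using Fin.lastCases with
      | last => simp
      | cast i => simpa using hM2 i
    · intro i
      induction i using Fin.lastCases with
      | last =>
        rw [Fin.sum_univ_castSucc]
        simp [← hc]
      | cast i =>
        rw [Fin.sum_univ_castSucc]
        simp only [Fin.lastCases_castSucc, Fin.snoc_castSucc, Fin.snoc_last]
        have := hM3 i
        simp only [hu'] at this
        linear_combination this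

theorem regular_sequence_has_only_trivial_relations
    {A : Type*} [CommRing A] {n : ℕ} (a : Fin n → A)
    (ha : IsRegularSeq a) (u : Fin n → A) (hu : ∑ i, u i * a i = 0) :
    ∃ M : Matrix (Fin n) (Fin n) A,
      (∀ i j, M i j = - M j i) ∧ (∀ i, M i i = 0) ∧
      ∀ i, u i = ∑ j, M i j * a j := by
  exact aux_regular n a ha u hu
end

section
/- Let k be an arbitrary commutative ring, let A = k[X₁, …, Xₙ] be the polynomial ring in n variables over k, let 𝔞 be an ideal of A, and set B = A/𝔞. If B is finitely generated as a k-module, then 𝔞 contains a regular sequence of length n: there exist g₁, …, gₙ ∈ 𝔞 such that (g₁, …, gₙ) is a regular sequence in A. -/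
open Polynomial


lemma RingEquiv.map_mem_nzd {R S : Type*} [CommRing R] [CommRing S]
    (e : R ≃+* S) {x : R} (hx : x ∈ nonZeroDivisors R) : e x ∈ nonZeroDivisors S := by
  rw [← MulEquivClass.map_nonZeroDivisors e]
  exact Submonoid.mem_map_of_mem _ hx

lemma monic_mk_map_C_mem_nonZeroDivisors {D : Type*} [CommRing D] (I₀ : Ideal D)
    {p : D[X]} (hp : p.Monic) :
    Ideal.Quotient.mk (I₀.map (C : D →+* D[X])) p ∈
      nonZeroDivisors (D[X] ⧸ I₀.map (C : D →+* D[X])) := by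
  have h2 := (hp.map (Ideal.Quotient.mk I₀)).mem_nonZeroDivisors
  have h3 := (Ideal.polynomialQuotientEquivQuotientPolynomial I₀).map_mem_nzd h2
  rwa [Ideal.polynomialQuotientEquivQuotientPolynomial_map_mk] at h3

lemma mk_mem_nonZeroDivisors_of_equiv {R S : Type*} [CommRing R] [CommRing S]
    (e : R ≃+* S) (I : Ideal R) (a : R)
    (h : Ideal.Quotient.mk (I.map (e : R →+* S)) (e a) ∈
      nonZeroDivisors (S ⧸ I.map (e : R →+* S))) :
    Ideal.Quotient.mk I a ∈ nonZeroDivisors (R ⧸ I) := by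
  have h2 := ((Ideal.quotientEquiv I (I.map (e : R →+* S)) e rfl).symm).map_mem_nzd h
  rwa [show (Ideal.quotientEquiv I (I.map (e : R →+* S)) e rfl).symm
      (Ideal.Quotient.mk _ (e a)) = Ideal.Quotient.mk I a from by
    apply (Ideal.quotientEquiv I (I.map (e : R →+* S)) e rfl).injective
    rw [RingEquiv.apply_symm_apply, Ideal.quotientEquiv_mk]] at h2


theorem ideal_with_finite_quotient_contains_regular_sequence
    {k : Type*} [CommRing k] {n : ℕ}
    (𝔞 : Ideal (MvPolynomial (Fin n) k))
    (hfin : Module.Finite k (MvPolynomial (Fin n) k ⧸ 𝔞)) :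
    ∃ g : Fin n → MvPolynomial (Fin n) k,
      (∀ i, g i ∈ 𝔞) ∧ IsRegularSeq g := by
  classical
  have hex : ∀ i : Fin n, ∃ p : Polynomial k, p.Monic ∧
      Polynomial.aeval (Ideal.Quotient.mk 𝔞 (MvPolynomial.X i)) p = 0 := by
    intro i
    obtain ⟨p, hm, hev⟩ := IsIntegral.of_finite k (Ideal.Quotient.mk 𝔞 (MvPolynomial.X i))
    exact ⟨p, hm, by rwa [Polynomial.aeval_def]⟩
  choose p hmonic hev using hex
  set g : Fin n → MvPolynomial (Fin n) k :=
    fun i => Polynomial.aeval (MvPolynomial.X i) (p i) with hg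
  have hmem : ∀ i, g i ∈ 𝔞 := by
    intro i
    rw [← Ideal.Quotient.eq_zero_iff_mem]
    have := Polynomial.aeval_algHom_apply (Ideal.Quotient.mkₐ k 𝔞) (MvPolynomial.X i) (p i)
    rw [Ideal.Quotient.mkₐ_eq_mk] at this
    rw [hg]
    simp only
    rw [← this]
    exact hev i
  refine ⟨g, hmem, ?_⟩
  intro i
  -- setup
  set D := MvPolynomial {j : Fin n // j ≠ i} k with hD
  set e : MvPolynomial (Fin n) k ≃ₐ[k] Polynomial D :=
    (MvPolynomial.renameEquiv k (Equiv.optionSubtypeNe i).symm).trans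
      (MvPolynomial.optionEquivLeft k {j : Fin n // j ≠ i}) with he
  have heX : ∀ (j : Fin n) (h : j ≠ i),
      e (MvPolynomial.X j) = Polynomial.C (MvPolynomial.X ⟨j, h⟩) := by
    intro j h
    rw [he]
    simp only [AlgEquiv.trans_apply, MvPolynomial.renameEquiv_apply, MvPolynomial.rename_X,
      Equiv.optionSubtypeNe_symm_of_ne h]
    exact MvPolynomial.optionEquivLeft_X_some k _ _
  have heXi : e (MvPolynomial.X i) = Polynomial.X := by
    rw [he]
    simp only [AlgEquiv.trans_apply, MvPolynomial.renameEquiv_apply, MvPolynomial.rename_X,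
      Equiv.optionSubtypeNe_symm_self]
    exact MvPolynomial.optionEquivLeft_X_none k _
  set q : Fin n → D := fun j =>
    if h : j = i then 0
    else Polynomial.aeval (MvPolynomial.X (⟨j, h⟩ : {j : Fin n // j ≠ i})) (p j) with hq
  have heg : ∀ j : Fin n, j < i → e (g j) = Polynomial.C (q j) := by
    intro j hji
    have hne : j ≠ i := ne_of_lt hji
    have h1 : e (g j) = Polynomial.aeval (e (MvPolynomial.X j)) (p j) :=
      (Polynomial.aeval_algHom_apply e.toAlgHom (MvPolynomial.X j) (p j)).symm
    rw [h1, heX j hne]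
    have h2 := Polynomial.aeval_algHom_apply (Polynomial.CAlgHom (R := k) (A := D))
      (MvPolynomial.X (⟨j, hne⟩ : {j : Fin n // j ≠ i})) (p j)
    rw [hq]
    simp only [dif_neg hne]
    exact h2.trans rfl
  have hegi : e (g i) = (p i).map (algebraMap k D) := by
    have h1 : e (g i) = Polynomial.aeval (e (MvPolynomial.X i)) (p i) :=
      (Polynomial.aeval_algHom_apply e.toAlgHom (MvPolynomial.X i) (p i)).symm
    rw [h1, heXi]
    have h2 := Polynomial.aeval_algHom_apply
      (Polynomial.mapAlgHom (Algebra.ofId k D)) (Polynomial.X : Polynomial k) (p i)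
    rw [Polynomial.coe_mapAlgHom, Polynomial.map_X, Polynomial.aeval_X_left_apply] at h2
    rw [h2]
    rfl
  have hmono : (e (g i)).Monic := by rw [hegi]; exact (hmonic i).map _
  set I₀ : Ideal D := Ideal.span (q '' {j | j < i}) with hI₀
  have hmap : (Ideal.span (g '' {j | j < i})).map (e : MvPolynomial (Fin n) k →+* Polynomial D)
      = I₀.map (C : D →+* Polynomial D) := by
    rw [Ideal.map_span, hI₀, Ideal.map_span, ← Set.image_comp, ← Set.image_comp]
    congr 1
    apply Set.image_congr
    intro j hj
    exact heg j hj
  apply mk_mem_nonZeroDivisors_of_equiv (e : MvPolynomial (Fin n) k ≃+* Polynomial D)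
  rw [show ((e : MvPolynomial (Fin n) k ≃+* Polynomial D) :
      MvPolynomial (Fin n) k →+* Polynomial D) =
      (e : MvPolynomial (Fin n) k →+* Polynomial D) from rfl, hmap]
  exact monic_mk_map_C_mem_nonZeroDivisors I₀ hmono
end

section
/- Let k be an arbitrary commutative ring and A = k[X₁, …, Xₙ]. For each i ∈ {1, …, n}, let fᵢ ∈ A be a polynomial which is the image of a monic univariate polynomial under the k-algebra map k[T] → A sending T to Xᵢ (so fᵢ is a monic polynomial in the single variable Xᵢ). Then the sequence (fₙ, f_{n−1}, …, f₁) is a regular sequence in A. -/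
lemma mem_nonZeroDivisors_of_ringEquiv {A B : Type*} [CommRing A] [CommRing B]
    (e : A ≃+* B) {x : A} (h : e x ∈ nonZeroDivisors B) : x ∈ nonZeroDivisors A := by
  rw [← MulEquivClass.map_nonZeroDivisors e.symm]
  exact ⟨e x, h, e.symm_apply_apply x⟩

lemma key_lemma {k : Type*} [CommRing k] {n : ℕ} (f : Fin n → MvPolynomial (Fin n) k)
    (p : Fin n → Polynomial k) (hmonic : ∀ i, (p i).Monic)
    (hval : ∀ i, f i = Polynomial.aeval (MvPolynomial.X i : MvPolynomial (Fin n) k) (p i))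
    (t : Fin n) (S : Set (Fin n)) (hS : t ∉ S) :
    Ideal.Quotient.mk (Ideal.span (f '' S)) (f t) ∈
      nonZeroDivisors (MvPolynomial (Fin n) k ⧸ Ideal.span (f '' S)) := by
  classical
  set R := MvPolynomial {m : Fin n // m ≠ t} k with hR
  let e : Fin n ≃ Option {m : Fin n // m ≠ t} := (Equiv.optionSubtypeNe t).symm
  let Φ : MvPolynomial (Fin n) k ≃ₐ[k] Polynomial R :=
    (MvPolynomial.renameEquiv k e).trans (MvPolynomial.optionEquivLeft k _)
  have het : e t = none := Equiv.optionSubtypeNe_symm_self t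
  have hΦXt : Φ (MvPolynomial.X t) = Polynomial.X := by
    show MvPolynomial.optionEquivLeft k _ (MvPolynomial.rename e (MvPolynomial.X t)) = _
    rw [MvPolynomial.rename_X, het, MvPolynomial.optionEquivLeft_X_none]
  have hΦXm : ∀ (m : Fin n) (h : m ≠ t),
      Φ (MvPolynomial.X m) = Polynomial.C (MvPolynomial.X (⟨m, h⟩ : {m : Fin n // m ≠ t})) := by
    intro m h
    have hem : e m = some ⟨m, h⟩ := Equiv.optionSubtypeNe_symm_of_ne h
    show MvPolynomial.optionEquivLeft k _ (MvPolynomial.rename e (MvPolynomial.X m)) = _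
    rw [MvPolynomial.rename_X, hem, MvPolynomial.optionEquivLeft_X_some]
  -- image of f t
  have hΦft : Φ (f t) = (p t).map (algebraMap k R) := by
    rw [hval t, ← Polynomial.aeval_algHom_apply, hΦXt]
    have := Polynomial.aeval_algHom_apply (Polynomial.mapAlgHom (Algebra.ofId k R))
      (Polynomial.X : Polynomial k) (p t)
    simp only [Polynomial.map_X, Polynomial.aeval_X_left_apply, Polynomial.coe_mapAlgHom] at this
    rw [this]
    rfl
  -- images of f m for m in S
  let g : Fin n → R := fun m =>
    if h : m = t then 1 else Polynomial.aeval (MvPolynomial.X (⟨m, h⟩ : {m : Fin n // m ≠ t})) (p m)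
  have hΦfm : ∀ m ∈ S, Φ (f m) = Polynomial.C (g m) := by
    intro m hm
    have hmt : m ≠ t := fun h => hS (h ▸ hm)
    rw [hval m, ← Polynomial.aeval_algHom_apply, hΦXm m hmt]
    have := Polynomial.aeval_algHom_apply (Polynomial.CAlgHom (R := k) (A := R))
      (MvPolynomial.X (⟨m, hmt⟩ : {m : Fin n // m ≠ t})) (p m)
    simp only [Polynomial.CAlgHom_apply] at this
    rw [this]
    simp [g, hmt]
  set J : Ideal R := Ideal.span (g '' S) with hJ
  have himage : ⇑(Φ : MvPolynomial (Fin n) k →+* Polynomial R) '' (f '' S) =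
      ⇑(Polynomial.C : R →+* Polynomial R) '' (g '' S) := by
    rw [Set.image_image, Set.image_image]
    exact Set.image_congr fun m hm => hΦfm m hm
  have hmap : Ideal.map (Φ : MvPolynomial (Fin n) k →+* Polynomial R)
      (Ideal.span (f '' S)) = J.map (Polynomial.C : R →+* Polynomial R) := by
    rw [Ideal.map_span, Ideal.map_span, himage]
  let Θ₁ : (MvPolynomial (Fin n) k ⧸ Ideal.span (f '' S)) ≃+*
      (Polynomial R ⧸ J.map (Polynomial.C : R →+* Polynomial R)) :=
    Ideal.quotientEquiv _ _ Φ.toRingEquiv hmap.symm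
  let Θ₂ : (Polynomial R ⧸ J.map (Polynomial.C : R →+* Polynomial R)) ≃+* Polynomial (R ⧸ J) :=
    (Ideal.polynomialQuotientEquivQuotientPolynomial J).symm
  apply mem_nonZeroDivisors_of_ringEquiv (B := Polynomial (R ⧸ J)) (Θ₁.trans Θ₂)
  have hΘ : (Θ₁.trans Θ₂) (Ideal.Quotient.mk (Ideal.span (f '' S)) (f t)) =
      (p t).map ((Ideal.Quotient.mk J).comp (algebraMap k R)) := by
    have h1 : Θ₁ (Ideal.Quotient.mk (Ideal.span (f '' S)) (f t)) =
        Ideal.Quotient.mk _ (Φ (f t)) := rfl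
    rw [RingEquiv.trans_apply, h1, hΦft]
    show (Ideal.polynomialQuotientEquivQuotientPolynomial J).symm _ = _
    rw [Ideal.polynomialQuotientEquivQuotientPolynomial_symm_mk, Polynomial.map_map]
  rw [hΘ]
  have hm : (((p t).map ((Ideal.Quotient.mk J).comp (algebraMap k R)))).Monic :=
    Polynomial.Monic.map _ (hmonic t)
  exact hm.isRegular.mem_nonZeroDivisors

/-- If each `f i` is the image of a monic univariate polynomial under `k[T] → k[X₁,…,Xₙ]`,
`T ↦ Xᵢ`, then the reversed sequence `(f (n-1), …, f 0)` is regular in `k[X₁,…,Xₙ]`. -/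
theorem monic_univariate_polynomials_form_regular_sequence
    {k : Type*} [CommRing k] {n : ℕ} (f : Fin n → MvPolynomial (Fin n) k)
    (hf : ∀ i : Fin n, ∃ p : Polynomial k, p.Monic ∧
      f i = Polynomial.aeval (MvPolynomial.X i : MvPolynomial (Fin n) k) p) :
    IsRegularSeq (fun i : Fin n => f i.rev) := by
  choose p hmonic hval using hf
  intro i
  have hset : (fun j : Fin n => f j.rev) '' {j | j < i} = f '' {m | i.rev < m} := by
    ext x
    constructor
    · rintro ⟨j, hj, rfl⟩
      exact ⟨j.rev, Fin.rev_lt_rev.mpr hj, rfl⟩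
    · rintro ⟨m, hm, rfl⟩
      refine ⟨m.rev, ?_, by simp⟩
      have h2 : m.rev < (i.rev).rev := Fin.rev_lt_rev.mpr hm
      rwa [Fin.rev_rev] at h2
  have key := key_lemma f p hmonic hval i.rev {m | i.rev < m} (by simp)
  rw [← hset] at key
  exact key
end

section
/- Let k be a field, let f₁, …, fₙ ∈ k[X₁, …, Xₙ], and let A = k[X₁, …, Xₙ]/(f₁, …, fₙ). If the Jacobian matrix (∂fᵢ/∂Xⱼ)₁≤i,j≤n, taken modulo (f₁, …, fₙ), is invertible over A, then A is finitely generated as a k-module. -/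
open MvPolynomial

lemma derivation_aeval_eq_sum {k A M : Type*} [CommRing k] [CommRing A] [Algebra k A]
    [AddCommGroup M] [Module k M] [Module A M] [IsScalarTower k A M]
    (D : Derivation k A M) {n : ℕ} (x : Fin n → A) (p : MvPolynomial (Fin n) k) :
    D (aeval x p) = ∑ j, aeval x (pderiv j p) • D (x j) := by
  induction p using MvPolynomial.induction_on with
  | C a => simp
  | add p q hp hq => simp [hp, hq, add_smul, Finset.sum_add_distrib]
  | mul_X p i hp =>
    simp only [map_mul, aeval_X]
    rw [Derivation.leibniz]
    simp only [pderiv_mul, map_add, map_mul, aeval_X, add_smul, Finset.sum_add_distrib]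
    rw [add_comm]
    congr 1
    · rw [hp, Finset.smul_sum]
      refine Finset.sum_congr rfl fun j _ => ?_
      rw [smul_smul, mul_comm]
    · rw [Finset.sum_eq_single i]
      · simp
      · intro j _ hj
        simp [Pi.single_eq_of_ne (Ne.symm hj)]
      · simp

section
variable {k : Type*} [Field k] {n : ℕ} (f : Fin n → MvPolynomial (Fin n) k)

lemma unram (hJ : IsUnit (Matrix.of fun i j : Fin n =>
      Ideal.Quotient.mk (Ideal.span (Set.range f)) (MvPolynomial.pderiv j (f i)))) :
    Algebra.FormallyUnramified k (MvPolynomial (Fin n) k ⧸ Ideal.span (Set.range f)) := by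
  set I := Ideal.span (Set.range f) with hI
  set A := MvPolynomial (Fin n) k ⧸ I with hA
  let D := KaehlerDifferential.D k A
  have hmk : ∀ p : MvPolynomial (Fin n) k,
      Ideal.Quotient.mk I p = aeval (fun j => Ideal.Quotient.mk I (X j)) p := by
    intro p
    have := MvPolynomial.aeval_unique (Ideal.Quotient.mkₐ k I)
    conv_lhs => rw [show (Ideal.Quotient.mk I : MvPolynomial (Fin n) k → A) p
      = Ideal.Quotient.mkₐ k I p from rfl, this]
    rfl
  set w : Fin n → Ω[A⁄k] := fun j => D (Ideal.Quotient.mk I (X j)) with hw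
  have hrel : ∀ i, ∑ l, (Matrix.of fun i j : Fin n =>
      Ideal.Quotient.mk I (MvPolynomial.pderiv j (f i))) i l • w l = 0 := by
    intro i
    have h0 : Ideal.Quotient.mk I (f i) = 0 := by
      rw [Ideal.Quotient.eq_zero_iff_mem]
      exact Ideal.subset_span ⟨i, rfl⟩
    have hD := derivation_aeval_eq_sum D (fun j => Ideal.Quotient.mk I (X j)) (f i)
    rw [← hmk, h0, map_zero] at hD
    refine Eq.trans ?_ hD.symm
    refine Finset.sum_congr rfl fun l _ => ?_
    rw [Matrix.of_apply, hmk]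
  have hzero : ∀ j, w j = 0 := by
    intro j
    obtain ⟨u, hu⟩ := hJ
    let B : Matrix (Fin n) (Fin n) A := ↑u⁻¹
    let J' : Matrix (Fin n) (Fin n) A := ↑u
    have h1 : B * J' = 1 := u.inv_mul
    calc w j = ∑ l, (1 : Matrix (Fin n) (Fin n) A) j l • w l := by
          simp only [Matrix.one_apply, ite_smul]
          rw [Finset.sum_eq_single j]
          · rw [if_pos rfl]; exact (one_smul A (w j)).symm
          · intro l _ hl; rw [if_neg (Ne.symm hl)]; exact zero_smul A (w l)
          · simp
      _ = ∑ l, (B * J') j l • w l := by rw [h1]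
      _ = ∑ l, ∑ i, (B j i * J' i l) • w l := by
          simp only [Matrix.mul_apply]
          exact Finset.sum_congr rfl fun l _ => Finset.sum_smul (M := Ω[A⁄k]) (R := A)
      _ = ∑ i, B j i • ∑ l, J' i l • w l := by
          rw [Finset.sum_comm]
          refine Finset.sum_congr rfl fun i _ => ?_
          exact (Finset.sum_congr rfl fun l _ => mul_smul (α := A) (β := Ω[A⁄k]) (B j i) (J' i l) (w l)).trans
            (Finset.smul_sum (M := A) (N := Ω[A⁄k]) (r := B j i) (f := fun l => J' i l • w l)
              (s := Finset.univ)).symm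
      _ = 0 := by
          refine Finset.sum_eq_zero fun i _ => ?_
          have h2 : ∑ l, J' i l • w l = 0 := by
            simpa only [J', hu] using hrel i
          rw [h2, smul_zero]
  have hDzero : (D : Derivation k A (Ω[A⁄k])) = 0 := by
    apply Derivation.ext_of_adjoin_eq_top
      (s := Set.range fun j => Ideal.Quotient.mk I (X j))
    · show Algebra.adjoin k (Set.range ((Ideal.Quotient.mkₐ k I : _ →ₐ[k] A) ∘ X)) = ⊤
      rw [Set.range_comp, ← AlgHom.map_adjoin, MvPolynomial.adjoin_range_X, Algebra.map_top,
        AlgHom.range_eq_top]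
      exact Ideal.Quotient.mkₐ_surjective k I
    · rintro _ ⟨j, rfl⟩
      exact hzero j
  have hsub : Subsingleton (Ω[A⁄k]) := by
    refine (subsingleton_iff_forall_eq 0).mpr fun y => ?_
    have hy : y ∈ (⊤ : Submodule A (Ω[A⁄k])) := trivial
    rw [← KaehlerDifferential.span_range_derivation,
      show KaehlerDifferential.D k A = 0 from hDzero] at hy
    simpa using hy
  exact ⟨hsub⟩
end


universe u

lemma quot_integral {k A : Type u} [Field k] [CommRing A] [Algebra k A]
    [Algebra.FormallyUnramified k A] [Algebra.FiniteType k A]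
    (p : Ideal A) (hp : p.IsPrime) : Algebra.IsIntegral k (A ⧸ p) := by
  haveI := hp
  set B := A ⧸ p with hB
  haveI : Algebra.FiniteType k B :=
    Algebra.FiniteType.of_surjective (Ideal.Quotient.mkₐ k p)
      (Ideal.Quotient.mkₐ_surjective k p)
  haveI : Algebra.FormallyUnramified k B := inferInstance
  set K := FractionRing B with hK
  haveI : Algebra.FormallyUnramified B K :=
    Algebra.FormallyUnramified.of_isLocalization (nonZeroDivisors B)
  haveI : Algebra.FormallyUnramified k K := Algebra.FormallyUnramified.comp k B K
  haveI : Algebra.EssFiniteType B K :=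
    Algebra.EssFiniteType.of_isLocalization K (nonZeroDivisors B)
  haveI : Algebra.EssFiniteType k K := Algebra.EssFiniteType.comp k B K
  haveI : Algebra.IsSeparable k K := Algebra.FormallyUnramified.isSeparable k K
  constructor
  intro b
  have h1 : IsIntegral k (algebraMap B K b) := Algebra.IsSeparable.isIntegral k _
  exact IsIntegral.tower_bot (IsFractionRing.injective B K) h1

lemma finite_of_unram {k A : Type u} [Field k] [CommRing A] [Algebra k A]
    [Algebra.FormallyUnramified k A] [Algebra.FiniteType k A] : Module.Finite k A := by
  haveI : IsNoetherianRing A := Algebra.FiniteType.isNoetherianRing k A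
  suffices h : Algebra.IsIntegral k A from Algebra.IsIntegral.finite
  constructor
  intro a
  have hfin : (minimalPrimes A).Finite := minimalPrimes.finite_of_isNoetherianRing A
  -- choose monic polynomials for each minimal prime
  have key : ∀ p ∈ hfin.toFinset, ∃ q : Polynomial k, q.Monic ∧
      Polynomial.aeval (Ideal.Quotient.mk p a) q = 0 := by
    intro p hp
    rw [Set.Finite.mem_toFinset] at hp
    have hprime : p.IsPrime := hp.1.1
    have := quot_integral (k := k) p hprime
    obtain ⟨q, hq1, hq2⟩ := this.isIntegral (Ideal.Quotient.mk p a)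
    exact ⟨q, hq1, by rwa [Polynomial.aeval_def]⟩
  choose q hq1 hq2 using key
  set Q : Polynomial k := ∏ p ∈ hfin.toFinset.attach, q p p.2 with hQ
  have hQmonic : Q.Monic := Polynomial.monic_prod_of_monic _ _ fun p _ => hq1 p p.2
  have hnil : IsNilpotent (Polynomial.aeval a Q) := by
    rw [← mem_nilradical]
    have : nilradical A = sInf (minimalPrimes A) := by
      rw [show minimalPrimes A = (⊥ : Ideal A).minimalPrimes from rfl,
        Ideal.sInf_minimalPrimes]
      rfl
    rw [this, Ideal.mem_sInf]
    intro p hp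
    have hmem : (p : Ideal A) ∈ hfin.toFinset := hfin.mem_toFinset.mpr hp
    rw [← Ideal.Quotient.eq_zero_iff_mem]
    have : Ideal.Quotient.mk p (Polynomial.aeval a Q) =
        Polynomial.aeval (Ideal.Quotient.mk p a) Q := by
      simp [Polynomial.aeval_def, Polynomial.hom_eval₂, ← IsScalarTower.algebraMap_eq]
    rw [this, hQ, map_prod]
    exact Finset.prod_eq_zero (Finset.mem_attach _ ⟨p, hmem⟩) (hq2 p hmem)
  obtain ⟨m, hm⟩ := hnil
  exact ⟨Q ^ m, hQmonic.pow m, by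
    rw [← Polynomial.aeval_def, map_pow, hm]⟩

/-- If `k` is a field and the Jacobian matrix of `(f₁, …, fₙ)` is invertible modulo
`(f₁, …, fₙ)`, then `A = k[X₁,…,Xₙ]/(f₁,…,fₙ)` is finitely generated as a `k`-module. -/
theorem finite_of_invertible_jacobian
    {k : Type*} [Field k] {n : ℕ} (f : Fin n → MvPolynomial (Fin n) k)
    (hJ : IsUnit (Matrix.of fun i j : Fin n =>
      Ideal.Quotient.mk (Ideal.span (Set.range f)) (MvPolynomial.pderiv j (f i)))) :
    Module.Finite k (MvPolynomial (Fin n) k ⧸ Ideal.span (Set.range f)) := by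
  haveI := unram f hJ
  haveI : Algebra.FiniteType k (MvPolynomial (Fin n) k ⧸ Ideal.span (Set.range f)) :=
    Algebra.FiniteType.of_surjective
      (Ideal.Quotient.mkₐ k (Ideal.span (Set.range f)))
      (Ideal.Quotient.mkₐ_surjective k _)
  exact finite_of_unram
end

section
/- Let k be an arbitrary commutative ring and let f₁, …, fₛ ∈ k[X₁, …, Xₙ] be a fundamentally universally complete sequence, i.e. for every finitely generated ideal 𝔠 of k, every relation among the images f̄₁, …, f̄ₛ in (k/𝔠)[X₁, …, Xₙ] is generated by the trivial relations (the relation vector is given by an alternating matrix applied to (f̄₁, …, f̄ₛ)). Then the quotient algebra A = k[X₁, …, Xₙ]/(f₁, …, fₛ) is flat as a k-module. -/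
/-- A sequence `(b 0, …, b (s-1))` in a commutative ring `B` has only trivial relations
if every relation vector is obtained by applying an alternating matrix to the sequence. -/
def HasOnlyTrivialRelations {B : Type*} [CommRing B] {s : ℕ} (b : Fin s → B) : Prop :=
  ∀ u : Fin s → B, (∑ i, u i * b i) = 0 →
    ∃ M : Matrix (Fin s) (Fin s) B,
      (∀ i j, M i j = - M j i) ∧ (∀ i, M i i = 0) ∧
      ∀ i, u i = ∑ j, M i j * b j

/-- If `(f₁, …, fₛ)` is fundamentally universally complete (its image modulo every
finitely generated ideal `𝔠` of `k` has only trivial relations), then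
`k[X₁,…,Xₙ]/(f₁,…,fₛ)` is flat over `k`. -/
theorem flat_of_fundamentally_universally_complete
    {k : Type*} [CommRing k] {n s : ℕ} (f : Fin s → MvPolynomial (Fin n) k)
    (hfuc : ∀ 𝔠 : Ideal k, 𝔠.FG →
      HasOnlyTrivialRelations
        (fun i => MvPolynomial.map (Ideal.Quotient.mk 𝔠) (f i))) :
    Module.Flat k (MvPolynomial (Fin n) k ⧸ Ideal.span (Set.range f)) := by
  classical
  set I : Ideal (MvPolynomial (Fin n) k) := Ideal.span (Set.range f) with hI
  apply Module.Flat.of_forall_isTrivialRelation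
  intro ι c x hcx
  -- lift x to polynomials p
  choose p hp using fun i => Ideal.Quotient.mk_surjective (I := I) (x i)
  set 𝔠 : Ideal k := Ideal.span (Set.range c) with h𝔠
  have h𝔠fg : 𝔠.FG := Submodule.fg_span (Set.finite_range c)
  set g : MvPolynomial (Fin n) k := ∑ i, MvPolynomial.C (c i) * p i with hg
  have hgI : g ∈ I := by
    have : Ideal.Quotient.mk I g = 0 := by
      rw [hg, map_sum]
      rw [Finset.sum_congr rfl (fun i _ => show Ideal.Quotient.mk I (MvPolynomial.C (c i) * p i) = c i • x i by
        rw [← hp i, ← MvPolynomial.smul_eq_C_mul]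
        exact map_smul (Ideal.Quotient.mkₐ k I) (c i) (p i))]
      exact hcx
    exact (Submodule.Quotient.mk_eq_zero I).mp this
  obtain ⟨u, hu⟩ := Ideal.mem_span_range_iff_exists_fun.mp hgI
  -- reduce mod 𝔠
  set φ : MvPolynomial (Fin n) k →+* MvPolynomial (Fin n) (k ⧸ 𝔠) := MvPolynomial.map (Ideal.Quotient.mk 𝔠)
  have hφg : φ g = 0 := by
    rw [hg, map_sum]
    apply Finset.sum_eq_zero
    intro i _
    have : (Ideal.Quotient.mk 𝔠) (c i) = 0 :=
      Ideal.Quotient.eq_zero_iff_mem.mpr (Ideal.subset_span ⟨i, rfl⟩)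
    rw [map_mul, MvPolynomial.map_C, this, map_zero, zero_mul]
  have hrel : (∑ j, φ (u j) * (fun i => MvPolynomial.map (Ideal.Quotient.mk 𝔠) (f i)) j) = 0 := by
    have := congrArg φ hu
    rw [map_sum] at this
    simp only [map_mul] at this
    rw [this, hφg]
  obtain ⟨Mb, hMbskew, hMbdiag, hMbu⟩ := hfuc 𝔠 h𝔠fg (fun j => φ (u j)) hrel
  -- lift Mb to an alternating matrix over R
  have hφsurj : Function.Surjective φ := MvPolynomial.map_surjective _ Ideal.Quotient.mk_surjective
  choose N hN using fun j l => hφsurj (Mb j l)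
  set M : Matrix (Fin s) (Fin s) (MvPolynomial (Fin n) k) :=
    fun j l => if j < l then N j l else if l < j then - N l j else 0 with hM
  have hMφ : ∀ j l, φ (M j l) = Mb j l := by
    intro j l
    rcases lt_trichotomy j l with h | h | h
    · simp [hM, h, hN]
    · simp [hM, h, lt_irrefl, hMbdiag]
    · simp [hM, h.not_gt, h, hN, ← hMbskew]
  have hMskew : ∀ j l, M j l = - M l j := by
    intro j l
    rcases lt_trichotomy j l with h | h | h
    · simp [hM, h, h.not_gt]
    · simp [hM, h, lt_irrefl]
    · simp [hM, h, h.not_gt]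
  have hMdiag : ∀ j, M j j = 0 := by intro j; simp [hM]
  -- v j := u j - ∑ l, M j l * f l  lies in 𝔠·R
  set v : Fin s → MvPolynomial (Fin n) k := fun j => u j - ∑ l, M j l * f l with hv
  have hvker : ∀ j, v j ∈ Ideal.map (MvPolynomial.C : k →+* MvPolynomial (Fin n) k) 𝔠 := by
    intro j
    rw [← Ideal.mk_ker (I := 𝔠), ← MvPolynomial.ker_map, RingHom.mem_ker]
    rw [hv]
    simp only [map_sub, map_sum, map_mul]
    rw [hMbu j]
    simp [show ∀ l, MvPolynomial.map (Ideal.Quotient.mk 𝔠) (M j l) = Mb j l from hMφ j]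
  have hvrep : ∀ j, ∃ w : Fin ι → MvPolynomial (Fin n) k, ∑ i, w i * MvPolynomial.C (c i) = v j := by
    intro j
    have : Ideal.map (MvPolynomial.C : k →+* MvPolynomial (Fin n) k) 𝔠
        = Ideal.span (Set.range fun i => MvPolynomial.C (c i)) := by
      rw [h𝔠, Ideal.map_span, ← Set.range_comp]
      rfl
    rw [this] at hvker
    exact Ideal.mem_span_range_iff_exists_fun.mp (hvker j)
  choose w hw using hvrep
  -- quadratic alternating sum vanishes
  have hquad : (∑ j, ∑ l, M j l * f l * f j) = 0 := by
    rw [← Finset.sum_product']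
    apply Finset.sum_involution (fun a _ => (a.2, a.1))
    · intro a _
      rcases a with ⟨j, l⟩
      simp only
      have : M j l = - M l j := hMskew j l
      ring_nf
      rw [this]
      ring
    · intro a _ hfa
      rcases a with ⟨j, l⟩
      simp only [Prod.mk.injEq, ne_eq]
      intro h
      rcases h with ⟨h1, h2⟩
      apply hfa
      subst h1
      rw [hMdiag]
      ring
    · intro a ha; exact Finset.mem_univ _
    · intro a _; rfl
  -- hence g = ∑ j, v j * f j
  have hgv : g = ∑ j, v j * f j := by
    have h1 : ∑ j, v j * f j = (∑ j, u j * f j) - ∑ j, (∑ l, M j l * f l) * f j := by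
      simp [hv, sub_mul, Finset.sum_sub_distrib]
    have h2 : ∑ j, (∑ l, M j l * f l) * f j = ∑ j, ∑ l, M j l * f l * f j :=
      Finset.sum_congr rfl fun j _ => Finset.sum_mul _ _ _
    rw [h1, h2, hquad, sub_zero, hu]
  -- key elements q i with ∑ c i • q i = 0 in R and π (q i) = x i
  set q : Fin ι → MvPolynomial (Fin n) k := fun i => p i - ∑ j, w j i * f j with hq
  have hqrel : (∑ i, MvPolynomial.C (c i) * q i) = 0 := by
    rw [hq]
    simp only [mul_sub, Finset.sum_sub_distrib]
    rw [← hg, hgv]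
    rw [sub_eq_zero]
    have hms : ∀ i, MvPolynomial.C (c i) * ∑ j, w j i * f j
        = ∑ j, MvPolynomial.C (c i) * (w j i * f j) := fun i => Finset.mul_sum _ _ _
    rw [Finset.sum_congr rfl fun i _ => hms i, Finset.sum_comm]
    apply Finset.sum_congr rfl
    intro j _
    rw [← hw j, Finset.sum_mul]
    apply Finset.sum_congr rfl
    intro i _
    ring
  have hqx : ∀ i, Ideal.Quotient.mk I (q i) = x i := by
    intro i
    rw [hq]
    simp only [map_sub, map_sum, map_mul]
    rw [hp i]
    have : ∀ j, Ideal.Quotient.mk I (w j i) * Ideal.Quotient.mk I (f j) = 0 := by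
      intro j
      rw [(Ideal.Quotient.eq_zero_iff_mem).mpr (Ideal.subset_span ⟨j, rfl⟩ : f j ∈ I), mul_zero]
    rw [Finset.sum_congr rfl fun j _ => this j, Finset.sum_const_zero, sub_zero]
  -- construct the trivial-relation data
  set T : Finset (Fin n →₀ ℕ) := Finset.univ.biUnion (fun i => (q i).support) with hT
  refine ⟨Fintype.card {m // m ∈ T},
    fun i j => MvPolynomial.coeff ((Fintype.equivFin {m // m ∈ T}).symm j).1 (q i),
    fun j => Ideal.Quotient.mk I (MvPolynomial.monomial ((Fintype.equivFin {m // m ∈ T}).symm j).1 1), ?_, ?_⟩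
  · intro i
    rw [← hqx i]
    have hqi : q i = ∑ m ∈ T, MvPolynomial.monomial m (MvPolynomial.coeff m (q i)) := by
      conv_lhs => rw [MvPolynomial.as_sum (q i)]
      apply Finset.sum_subset
      · intro m hm
        exact Finset.mem_biUnion.mpr ⟨i, Finset.mem_univ _, hm⟩
      · intro m _ hm
        rw [MvPolynomial.notMem_support_iff.mp hm, MvPolynomial.monomial_zero]
    rw [hqi, map_sum]
    rw [← Finset.sum_attach T (fun m => Ideal.Quotient.mk I (MvPolynomial.monomial m (MvPolynomial.coeff m (q i))))]
    rw [← (Fintype.equivFin {m // m ∈ T}).sum_comp]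
    apply Finset.sum_congr rfl
    intro m _
    simp only [Equiv.symm_apply_apply]
    have hm : (MvPolynomial.monomial (m : Fin n →₀ ℕ)) (MvPolynomial.coeff (m : Fin n →₀ ℕ) (q i))
        = MvPolynomial.coeff (m : Fin n →₀ ℕ) (q i) • MvPolynomial.monomial (m : Fin n →₀ ℕ) 1 := by
      rw [MvPolynomial.smul_monomial, smul_eq_mul, mul_one]
    rw [hm]
    exact map_smul (Ideal.Quotient.mkₐ k I) _ _
  · intro j
    have := congrArg (MvPolynomial.coeff ((Fintype.equivFin {m // m ∈ T}).symm j).1) hqrel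
    rw [MvPolynomial.coeff_sum] at this
    simpa [MvPolynomial.coeff_C_mul] using this
end

section
/- Let k be a commutative ring, let f₁, …, fₛ ∈ k[X₁, …, Xₙ], and let 𝔞 be an ideal of k. Suppose that every relation among the images f̄₁, …, f̄ₛ in (k/𝔞)[X₁, …, Xₙ] is generated by the trivial relations (the relation vector is given by an alternating matrix applied to (f̄₁, …, f̄ₛ)). Then whenever h = u₁f₁ + ⋯ + uₛfₛ with u₁, …, uₛ ∈ k[X₁, …, Xₙ] and all coefficients of h lie in 𝔞, there exist v₁, …, vₛ ∈ k[X₁, …, Xₙ] all of whose coefficients lie in 𝔞 such that h = v₁f₁ + ⋯ + vₛfₛ. Equivalently, (f₁, …, fₛ) ∩ 𝔞·k[X₁, …, Xₙ] ⊆ 𝔞f₁ + ⋯ + 𝔞fₛ, where 𝔞fᵢ denotes the set of multiples of fᵢ by polynomials with coefficients in 𝔞. -/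
/-- If the images of `(f₁, …, fₛ)` in `(k/𝔞)[X₁,…,Xₙ]` have only trivial relations, then
any `h = ∑ uᵢ fᵢ` with all coefficients in `𝔞` can be rewritten as `h = ∑ vᵢ fᵢ` with the
`vᵢ` having all their coefficients in `𝔞`. -/
theorem rewrite_combination_with_coefficients_in_ideal
    {k : Type*} [CommRing k] {n s : ℕ} (f : Fin s → MvPolynomial (Fin n) k)
    (𝔞 : Ideal k)
    (htriv : HasOnlyTrivialRelations
      (fun i => MvPolynomial.map (Ideal.Quotient.mk 𝔞) (f i)))
    (h : MvPolynomial (Fin n) k) (u : Fin s → MvPolynomial (Fin n) k)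
    (hh : h = ∑ i, u i * f i)
    (hcoeff : ∀ m, MvPolynomial.coeff m h ∈ 𝔞) :
    ∃ v : Fin s → MvPolynomial (Fin n) k,
      (∀ i m, MvPolynomial.coeff m (v i) ∈ 𝔞) ∧ h = ∑ i, v i * f i := by
  classical
  have hker : ∀ p : MvPolynomial (Fin n) k,
      (MvPolynomial.map (Ideal.Quotient.mk 𝔞) p = 0) ↔ ∀ m, p.coeff m ∈ 𝔞 := by
    intro p
    rw [MvPolynomial.ext_iff]
    simp [MvPolynomial.coeff_map, Ideal.Quotient.eq_zero_iff_mem]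
  have hrel : (∑ i, (MvPolynomial.map (Ideal.Quotient.mk 𝔞) (u i)) *
      MvPolynomial.map (Ideal.Quotient.mk 𝔞) (f i)) = 0 := by
    have h0 := (hker h).2 hcoeff
    rw [hh] at h0
    simpa [map_sum, map_mul] using h0
  obtain ⟨M, hM_anti, hM_diag, hMu⟩ := htriv _ hrel
  have hsurj : Function.Surjective
      (MvPolynomial.map (σ := Fin n) (Ideal.Quotient.mk 𝔞)) :=
    MvPolynomial.map_surjective _ Ideal.Quotient.mk_surjective
  choose L hL using fun i j => hsurj (M i j)
  set N : Matrix (Fin s) (Fin s) (MvPolynomial (Fin n) k) := fun i j =>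
    if i < j then L i j else if j < i then - L j i else 0 with hN
  have hNmap : ∀ i j, MvPolynomial.map (Ideal.Quotient.mk 𝔞) (N i j) = M i j := by
    intro i j
    rcases lt_trichotomy i j with hij | hij | hij
    · simp [hN, hij, hL]
    · subst hij; simp [hN, hM_diag]
    · have h1 : ¬ i < j := not_lt.2 hij.le
      have := hM_anti i j
      simp [hN, h1, hij, hL, this]
  have hNanti : ∀ i j, N j i = - N i j := by
    intro i j
    rcases lt_trichotomy i j with hij | hij | hij
    · simp [hN, hij, not_lt.2 hij.le]
    · subst hij; simp [hN]
    · simp [hN, hij, not_lt.2 hij.le]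
  refine ⟨fun i => u i - ∑ j, N i j * f j, ?_, ?_⟩
  · intro i m
    have hz : MvPolynomial.map (Ideal.Quotient.mk 𝔞) (u i - ∑ j, N i j * f j) = 0 := by
      rw [map_sub, map_sum]
      simp only [map_mul, hNmap]
      rw [hMu i]
      simp
    exact (hker _).1 hz m
  · have hzero : (∑ i, ∑ j, N i j * f j * f i) = 0 := by
      rw [← Finset.sum_product']
      refine Finset.sum_involution (fun p _ => (p.2, p.1)) ?_ ?_ ?_ ?_
      · rintro ⟨i, j⟩ _
        simp only
        rw [hNanti j i]
        ring
      · rintro ⟨i, j⟩ _ hne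
        intro hcontra
        apply hne
        have hij : i = j := by
          have := congrArg Prod.fst hcontra
          simpa using this.symm
        subst hij
        simp [hN]
      · rintro ⟨i, j⟩ _; simp
      · rintro ⟨i, j⟩ _; rfl
    rw [hh]
    rw [Finset.sum_congr rfl (fun i _ => sub_mul (u i) _ (f i)),
      Finset.sum_sub_distrib]
    simp only [Finset.sum_mul]
    rw [hzero, sub_zero]
end

section
/- Let k be an arbitrary commutative ring, let f₁, …, fₙ ∈ k[X₁, …, Xₙ], and suppose A = k[X₁, …, Xₙ]/(f₁, …, fₙ) is finitely generated as a k-module. Then for every ideal 𝔠 of k, the ideal of (k/𝔠)[X₁, …, Xₙ] generated by the images f̄₁, …, f̄ₙ contains a regular sequence of length n in (k/𝔠)[X₁, …, Xₙ]. -/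
open MvPolynomial Polynomial

lemma nzd_of_ringEquiv {A B : Type*} [CommRing A] [CommRing B] (e : A ≃+* B) {a : A}
    (h : e a ∈ nonZeroDivisors B) : a ∈ nonZeroDivisors A := by
  rw [mem_nonZeroDivisors_iff_right] at h ⊢
  intro x hx
  have : e x * e a = 0 := by rw [← map_mul, hx, map_zero]
  have := h _ this
  exact e.injective (by simpa using this)

lemma aeval_X_poly {R A : Type*} [CommRing R] [CommRing A] [Algebra R A] (p : R[X]) :
    Polynomial.aeval (Polynomial.X : A[X]) p = p.map (algebraMap R A) := by
  have h : (Polynomial.aeval (Polynomial.X : A[X]) : R[X] →ₐ[R] A[X])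
      = (Polynomial.mapAlgHom (Algebra.ofId R A)) := by
    apply Polynomial.algHom_ext
    simp
  have := AlgHom.congr_fun h p
  simpa [Polynomial.mapAlgHom, Algebra.ofId] using this

lemma aux_regular_s9 {R : Type*} [CommRing R] {σ : Type*} (i : σ) (p : R[X]) (hp : p.Monic)
    (T : Set (MvPolynomial σ R))
    (hT : ∀ x ∈ T, ∃ y : MvPolynomial {j : σ // j ≠ i} R, rename Subtype.val y = x) :
    Ideal.Quotient.mk (Ideal.span T) (Polynomial.aeval (X i : MvPolynomial σ R) p) ∈
      nonZeroDivisors (MvPolynomial σ R ⧸ Ideal.span T) := by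
  classical
  set τ := {j : σ // j ≠ i}
  set S : Set (MvPolynomial τ R) := (rename (Subtype.val : τ → σ)) ⁻¹' T with hS
  have hTS : (rename (Subtype.val : τ → σ)) '' S = T := by
    apply subset_antisymm
    · rintro x ⟨y, hy, rfl⟩; exact hy
    · intro x hx
      obtain ⟨y, hy⟩ := hT x hx
      exact ⟨y, by simp [hS, Set.mem_preimage, hy, hx], hy⟩
  set e : Option τ ≃ σ := Equiv.optionSubtypeNe i with he
  set E : MvPolynomial σ R ≃ₐ[R] Polynomial (MvPolynomial τ R) :=
    (renameEquiv R e.symm).trans (optionEquivLeft R τ) with hE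
  have keynone : (e.symm i) = none := Equiv.optionSubtypeNe_symm_self i
  have hEX : E (X i) = Polynomial.X := by
    simp [hE, renameEquiv_apply, rename_X, keynone, optionEquivLeft_X_none]
  have keysome : ∀ y : MvPolynomial τ R, optionEquivLeft R τ (rename some y) = Polynomial.C y := by
    intro y
    have h : ((optionEquivLeft R τ : MvPolynomial (Option τ) R →ₐ[R] Polynomial (MvPolynomial τ R)).comp
        (rename (some : τ → Option τ))) = (Polynomial.CAlgHom.comp (AlgHom.id R _)) := by
      apply MvPolynomial.algHom_ext
      intro j
      simp [optionEquivLeft_X_some, Polynomial.CAlgHom]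
    have := AlgHom.congr_fun h y
    simpa [Polynomial.CAlgHom] using this
  have hEC : ∀ y : MvPolynomial τ R, E (rename Subtype.val y) = Polynomial.C y := by
    intro y
    have h1 : (rename (⇑e.symm) (rename Subtype.val y)) = rename some y := by
      rw [rename_rename]
      have hfun : (⇑e.symm ∘ (Subtype.val : τ → σ)) = some := by
        funext j
        exact Equiv.optionSubtypeNe_symm_of_ne j.2
      rw [hfun]
    simp only [hE, AlgEquiv.trans_apply, renameEquiv_apply, h1]
    exact keysome y
  set I : Ideal (MvPolynomial τ R) := Ideal.span S with hI
  have hmap : Ideal.map Polynomial.C I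
      = Ideal.map (E : MvPolynomial σ R →+* Polynomial (MvPolynomial τ R)) (Ideal.span T) := by
    rw [← hTS]
    show Ideal.map Polynomial.C (Ideal.span S) = _
    rw [Ideal.map_span, Ideal.map_span, ← Set.image_comp]
    exact congrArg Ideal.span (Set.image_congr fun y _ => (hEC y)).symm
  set Ψ : (MvPolynomial σ R ⧸ Ideal.span T) ≃+* Polynomial (MvPolynomial τ R ⧸ I) :=
    (Ideal.quotientEquiv (Ideal.span T) (Ideal.map Polynomial.C I)
      (E : MvPolynomial σ R ≃+* Polynomial (MvPolynomial τ R)) hmap).trans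
      (Ideal.polynomialQuotientEquivQuotientPolynomial I).symm with hΨ
  apply nzd_of_ringEquiv (B := Polynomial (MvPolynomial τ R ⧸ I)) Ψ
  have hcomp : Ψ (Ideal.Quotient.mk (Ideal.span T) (Polynomial.aeval (X i : MvPolynomial σ R) p))
      = p.map ((Ideal.Quotient.mk I).comp (algebraMap R (MvPolynomial τ R))) := by
    have h1 : E (Polynomial.aeval (X i : MvPolynomial σ R) p)
        = p.map (algebraMap R (MvPolynomial τ R)) := by
      rw [← Polynomial.aeval_algHom_apply E (X i) p, hEX, aeval_X_poly]
    rw [hΨ, RingEquiv.trans_apply]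
    show (Ideal.polynomialQuotientEquivQuotientPolynomial I).symm
      (Ideal.Quotient.mk _ (E (Polynomial.aeval (X i : MvPolynomial σ R) p))) = _
    rw [h1, Ideal.polynomialQuotientEquivQuotientPolynomial_symm_mk, Polynomial.map_map]
  rw [hcomp]
  exact (hp.map _).mem_nonZeroDivisors

/-- If `A = k[X₁,…,Xₙ]/(f₁,…,fₙ)` is finitely generated as a `k`-module, then for every
ideal `𝔠` of `k`, the ideal of `(k/𝔠)[X₁,…,Xₙ]` generated by the images of the `fᵢ`
contains a regular sequence of length `n`. -/
theorem reduced_ideal_contains_regular_sequence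
    {k : Type*} [CommRing k] {n : ℕ} (f : Fin n → MvPolynomial (Fin n) k)
    (hfin : Module.Finite k (MvPolynomial (Fin n) k ⧸ Ideal.span (Set.range f)))
    (𝔠 : Ideal k) :
    ∃ g : Fin n → MvPolynomial (Fin n) (k ⧸ 𝔠),
      (∀ i, g i ∈ Ideal.span (Set.range
        (fun i => MvPolynomial.map (Ideal.Quotient.mk 𝔠) (f i)))) ∧
      IsRegularSeq g := by
  classical
  set K := k ⧸ 𝔠
  set J' : Ideal (MvPolynomial (Fin n) K) :=
    Ideal.span (Set.range (fun i => MvPolynomial.map (Ideal.Quotient.mk 𝔠) (f i))) with hJ'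
  set B := MvPolynomial (Fin n) K ⧸ J'
  -- the k-algebra map from k[X] to B
  set Φ : MvPolynomial (Fin n) k →ₐ[k] B :=
    (Ideal.Quotient.mkₐ k J').comp (MvPolynomial.mapAlgHom (Ideal.Quotient.mkₐ k 𝔠)) with hΦ
  have hΦf : ∀ a ∈ Ideal.span (Set.range f), Φ a = 0 := by
    intro a ha
    have hle : Ideal.span (Set.range f) ≤ RingHom.ker (Φ : MvPolynomial (Fin n) k →+* B) := by
      rw [Ideal.span_le]
      rintro x ⟨j, rfl⟩
      simp only [SetLike.mem_coe, RingHom.mem_ker]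
      show Φ (f j) = 0
      have : Φ (f j) = Ideal.Quotient.mk J' (MvPolynomial.map (Ideal.Quotient.mk 𝔠) (f j)) := by
        simp [hΦ, MvPolynomial.mapAlgHom]
        rfl
      rw [this, Ideal.Quotient.eq_zero_iff_mem]
      exact Ideal.subset_span ⟨j, rfl⟩
    exact hle ha
  set lift : (MvPolynomial (Fin n) k ⧸ Ideal.span (Set.range f)) →ₐ[k] B :=
    Ideal.Quotient.liftₐ (Ideal.span (Set.range f)) Φ hΦf with hlift
  have hsurj : Function.Surjective lift := by
    intro b
    obtain ⟨x, rfl⟩ := Ideal.Quotient.mk_surjective b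
    obtain ⟨y, rfl⟩ := MvPolynomial.map_surjective (Ideal.Quotient.mk 𝔠)
      Ideal.Quotient.mk_surjective x
    refine ⟨Ideal.Quotient.mk _ y, ?_⟩
    show Φ y = _
    simp [hΦ, MvPolynomial.mapAlgHom]
    rfl
  haveI hBk : Module.Finite k B := Module.Finite.of_surjective lift.toLinearMap hsurj
  haveI hBK : Module.Finite K B := Module.Finite.of_restrictScalars_finite k K B
  have hq : ∀ i : Fin n, ∃ q : Polynomial K, q.Monic ∧
      Polynomial.aeval (MvPolynomial.X i : MvPolynomial (Fin n) K) q ∈ J' := by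
    intro i
    obtain ⟨q, hm, h0⟩ := IsIntegral.of_finite K (Ideal.Quotient.mk J' (MvPolynomial.X i))
    refine ⟨q, hm, ?_⟩
    rw [← Ideal.Quotient.eq_zero_iff_mem]
    have key : Ideal.Quotient.mk J' (Polynomial.aeval (MvPolynomial.X i) q)
        = Polynomial.aeval (Ideal.Quotient.mk J' (MvPolynomial.X i)) q := by
      have := Polynomial.aeval_algHom_apply (Ideal.Quotient.mkₐ K J')
        (MvPolynomial.X i : MvPolynomial (Fin n) K) q
      simpa using this.symm
    rw [key, ← Polynomial.aeval_def] at *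
    exact h0
  choose q hmono hmem using hq
  refine ⟨fun i => Polynomial.aeval (MvPolynomial.X i) (q i), hmem, ?_⟩
  intro i
  apply aux_regular_s9 i (q i) (hmono i)
  rintro x ⟨j, hj, rfl⟩
  have hne : (j : Fin n) ≠ i := ne_of_lt hj
  refine ⟨Polynomial.aeval (MvPolynomial.X ⟨j, hne⟩) (q j), ?_⟩
  have := Polynomial.aeval_algHom_apply
    (MvPolynomial.rename (Subtype.val : {l : Fin n // l ≠ i} → Fin n))
    (MvPolynomial.X ⟨j, hne⟩) (q j)
  set_option linter.unnecessarySimpa false in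
  simpa [MvPolynomial.rename_X] using this.symm
end

section
/- Let k be a commutative ring and f₁, …, fₛ ∈ k[X₁, …, Xₙ]. The quotient algebra A = k[X₁, …, Xₙ]/(f₁, …, fₛ) is flat as a k-module if and only if for every finitely generated ideal 𝔞 of k one has (f₁, …, fₛ) ∩ 𝔞·k[X₁, …, Xₙ] ⊆ 𝔞f₁ + ⋯ + 𝔞fₛ, where 𝔞fᵢ denotes the set of multiples of fᵢ by polynomials all of whose coefficients lie in 𝔞. Moreover, if this inclusion holds for every finitely generated ideal of k, it holds for every ideal of k. -/
open TensorProduct LinearMap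

section Aux
variable {k : Type*} [CommRing k] {n s : ℕ} (f : Fin s → MvPolynomial (Fin n) k)

private lemma mem_smul_top_iff_coeff (I : Ideal k) (h : MvPolynomial (Fin n) k) :
    h ∈ I • (⊤ : Submodule k (MvPolynomial (Fin n) k)) ↔ ∀ m, MvPolynomial.coeff m h ∈ I := by
  constructor
  · intro hh m
    refine Submodule.smul_induction_on hh ?_ ?_
    · intro a ha p _
      rw [MvPolynomial.coeff_smul]
      exact I.mul_mem_right _ ha
    · intro x y hx hy
      rw [MvPolynomial.coeff_add]
      exact I.add_mem hx hy
  · intro hc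
    rw [MvPolynomial.as_sum h]
    refine Submodule.sum_mem _ fun m _ => ?_
    have : (MvPolynomial.monomial m) (MvPolynomial.coeff m h)
        = (MvPolynomial.coeff m h) • (MvPolynomial.monomial m) (1 : k) := by
      rw [MvPolynomial.smul_monomial, smul_eq_mul, mul_one]
    rw [this]
    exact Submodule.smul_mem_smul (hc m) trivial
end Aux


def InclusionCondition {k : Type*} [CommRing k] {n s : ℕ}
    (f : Fin s → MvPolynomial (Fin n) k) (𝔞 : Ideal k) : Prop :=
  ∀ h ∈ Ideal.span (Set.range f), (∀ m, MvPolynomial.coeff m h ∈ 𝔞) →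
    ∃ v : Fin s → MvPolynomial (Fin n) k,
      (∀ i m, MvPolynomial.coeff m (v i) ∈ 𝔞) ∧ h = ∑ i, v i * f i

private lemma key_iff {k : Type*} [CommRing k] {n s : ℕ}
    (f : Fin s → MvPolynomial (Fin n) k) (I : Ideal k) (hIfg : I.FG) :
    InclusionCondition f I ↔
      Function.Injective (TensorProduct.lift
        ((lsmul k (MvPolynomial (Fin n) k ⧸ Ideal.span (Set.range f))).comp I.subtype)) := by
  classical
  set S : Ideal (MvPolynomial (Fin n) k) := Ideal.span (Set.range f) with hS
  set N : Submodule k (MvPolynomial (Fin n) k) := S.restrictScalars k with hN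
  set π : MvPolynomial (Fin n) k →ₗ[k] (MvPolynomial (Fin n) k ⧸ S) :=
    (Ideal.Quotient.mkₐ k S).toLinearMap with hπ
  have hπsurj : Function.Surjective π := Ideal.Quotient.mk_surjective
  set ι : N →ₗ[k] MvPolynomial (Fin n) k := N.subtype with hι
  have hπ0 : ∀ x : MvPolynomial (Fin n) k, π x = 0 ↔ x ∈ S := by
    intro x
    rw [hπ, AlgHom.toLinearMap_apply, Ideal.Quotient.mkₐ_eq_mk]
    exact Ideal.Quotient.eq_zero_iff_mem
  have hexact : Function.Exact ι π := by
    rw [LinearMap.exact_iff]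
    ext x
    simp only [LinearMap.mem_ker, LinearMap.mem_range]
    constructor
    · intro hx
      exact ⟨⟨x, (hπ0 x).mp hx⟩, rfl⟩
    · rintro ⟨⟨y, hy⟩, rfl⟩
      exact (hπ0 y).mpr hy
  set φP : I ⊗[k] MvPolynomial (Fin n) k →ₗ[k] MvPolynomial (Fin n) k :=
    TensorProduct.lift ((lsmul k (MvPolynomial (Fin n) k)).comp I.subtype) with hφP
  set φM : I ⊗[k] (MvPolynomial (Fin n) k ⧸ S) →ₗ[k] (MvPolynomial (Fin n) k ⧸ S) :=
    TensorProduct.lift ((lsmul k (MvPolynomial (Fin n) k ⧸ S)).comp I.subtype) with hφM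
  have hφPinj : Function.Injective φP :=
    Module.Flat.iff_lift_lsmul_comp_subtype_injective.mp inferInstance hIfg
  have hcomm : π ∘ₗ φP = φM ∘ₗ lTensor I π := by
    apply TensorProduct.ext'
    intro a p
    simp [hφP, hφM]
  have hrange : LinearMap.range φP = I • (⊤ : Submodule k (MvPolynomial (Fin n) k)) := by
    apply le_antisymm
    · rintro _ ⟨x, rfl⟩
      induction x using TensorProduct.induction_on with
      | zero => simp
      | tmul a p =>
        simp only [hφP, TensorProduct.lift.tmul, LinearMap.coe_comp, Function.comp_apply,
          Submodule.coe_subtype, lsmul_apply]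
        exact Submodule.smul_mem_smul a.2 trivial
      | add x y hx hy => rw [map_add]; exact Submodule.add_mem _ hx hy
    · intro x hx
      refine Submodule.smul_induction_on hx ?_ ?_
      · intro a ha p _
        exact ⟨⟨a, ha⟩ ⊗ₜ p, by simp [hφP]⟩
      · rintro x y ⟨u, rfl⟩ ⟨v, rfl⟩
        exact ⟨u + v, by simp⟩
  have himg : ∀ z : I ⊗[k] N, ∃ v : Fin s → MvPolynomial (Fin n) k,
      (∀ i m, MvPolynomial.coeff m (v i) ∈ I) ∧ φP (lTensor I ι z) = ∑ i, v i * f i := by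
    intro z
    induction z using TensorProduct.induction_on with
    | zero => exact ⟨0, by simp, by simp⟩
    | tmul a g =>
      obtain ⟨c, hc⟩ := (Submodule.mem_span_range_iff_exists_fun (MvPolynomial (Fin n) k)).mp g.2
      refine ⟨fun i => (a : k) • c i, fun i m => ?_, ?_⟩
      · rw [MvPolynomial.coeff_smul]
        exact I.mul_mem_right _ a.2
      · show φP (lTensor I ι (a ⊗ₜ g)) = _
        have step : φP (lTensor I ι (a ⊗ₜ g)) = (a : k) • (g : MvPolynomial (Fin n) k) := by
          simp [hφP, hι]
        rw [step, ← hc, Finset.smul_sum]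
        refine Finset.sum_congr rfl fun i _ => ?_
        rw [smul_eq_mul, ← smul_mul_assoc]
    | add x y hx hy =>
      obtain ⟨v, hv, hv2⟩ := hx
      obtain ⟨w, hw, hw2⟩ := hy
      refine ⟨v + w, fun i m => ?_, ?_⟩
      · simp only [Pi.add_apply, MvPolynomial.coeff_add]
        exact I.add_mem (hv i m) (hw i m)
      · rw [map_add, map_add, hv2, hw2, ← Finset.sum_add_distrib]
        exact Finset.sum_congr rfl fun i _ => by rw [Pi.add_apply, add_mul]
  constructor
  · -- inclusion condition ⇒ injective
    intro hinc
    rw [injective_iff_map_eq_zero]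
    intro x hx
    obtain ⟨y, rfl⟩ := lTensor_surjective I hπsurj x
    have hy0 : π (φP y) = 0 := by
      have hc := LinearMap.congr_fun hcomm y
      simp only [LinearMap.coe_comp, Function.comp_apply] at hc
      rw [hc, hx]
    have hmem : φP y ∈ S := (hπ0 _).mp hy0
    have hcoeff : ∀ m, MvPolynomial.coeff m (φP y) ∈ I :=
      (mem_smul_top_iff_coeff I _).mp (hrange ▸ ⟨y, rfl⟩)
    obtain ⟨v, hv, hveq⟩ := hinc (φP y) hmem hcoeff
    have hz : ∃ z : I ⊗[k] N, φP (lTensor I ι z) = φP y := by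
      have hvi : ∀ i, ∃ w : I ⊗[k] MvPolynomial (Fin n) k, φP w = v i := by
        intro i
        have hvm : v i ∈ I • (⊤ : Submodule k (MvPolynomial (Fin n) k)) :=
          (mem_smul_top_iff_coeff I _).mpr (hv i)
        rw [← hrange] at hvm
        exact hvm
      choose w hw using hvi
      have hμmem : ∀ (i : Fin s) (p : MvPolynomial (Fin n) k), p * f i ∈ N := fun i p =>
        Ideal.mul_mem_left _ _ (Ideal.subset_span ⟨i, rfl⟩)
      set μ : Fin s → (MvPolynomial (Fin n) k →ₗ[k] N) := fun i =>
        { toFun := fun p => ⟨p * f i, hμmem i p⟩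
          map_add' := fun p q => by ext; simp [add_mul]
          map_smul' := fun c p => by ext; simp [smul_mul_assoc] } with hμ
      refine ⟨∑ i, lTensor I (μ i) (w i), ?_⟩
      rw [map_sum, map_sum, hveq]
      refine Finset.sum_congr rfl fun i _ => ?_
      have hcm : φP ∘ₗ (lTensor I (ι ∘ₗ μ i))
          = (LinearMap.mulRight k (f i)).restrictScalars k ∘ₗ φP := by
        apply TensorProduct.ext'
        intro a p
        simp [hφP, hμ, hι, smul_mul_assoc]
      have h5 := LinearMap.congr_fun hcm (w i)
      simp only [LinearMap.coe_comp, Function.comp_apply] at h5 ⊢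
      rw [← lTensor_comp_apply, h5, hw]
      simp
    obtain ⟨z, hz⟩ := hz
    have hzy : lTensor I ι z = y := hφPinj hz
    rw [← hzy]
    exact (lTensor_exact (↥I) hexact hπsurj).apply_apply_eq_zero z
  · -- injective ⇒ inclusion condition
    intro hinj h hh hcoeff
    have h1 : h ∈ I • (⊤ : Submodule k (MvPolynomial (Fin n) k)) :=
      (mem_smul_top_iff_coeff I h).mpr hcoeff
    rw [← hrange] at h1
    obtain ⟨y, hy⟩ := h1
    have h2 : φM (lTensor I π y) = 0 := by
      have hc := LinearMap.congr_fun hcomm y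
      simp only [LinearMap.coe_comp, Function.comp_apply] at hc
      rw [← hc, hy]
      exact (hπ0 h).mpr hh
    have h3 : lTensor I π y = 0 := by
      rw [injective_iff_map_eq_zero] at hinj
      exact hinj _ h2
    have h4 : y ∈ Set.range (lTensor (↥I) ι) :=
      (lTensor_exact (↥I) hexact hπsurj y).mp h3
    obtain ⟨z, rfl⟩ := h4
    obtain ⟨v, hv, hveq⟩ := himg z
    exact ⟨v, hv, by rw [← hy]; exact hveq⟩

/-- Flatness criterion: `A = k[X₁,…,Xₙ]/(f₁,…,fₛ)` is flat over `k` iff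
`(f₁,…,fₛ) ∩ 𝔞·k[X₁,…,Xₙ] ⊆ 𝔞f₁ + ⋯ + 𝔞fₛ` for every finitely generated ideal `𝔞` of `k`;
moreover in that case the inclusion holds for every ideal of `k`. -/
theorem flatness_criterion_for_polynomial_quotient
    {k : Type*} [CommRing k] {n s : ℕ} (f : Fin s → MvPolynomial (Fin n) k) :
    (Module.Flat k (MvPolynomial (Fin n) k ⧸ Ideal.span (Set.range f)) ↔
      ∀ 𝔞 : Ideal k, 𝔞.FG → InclusionCondition f 𝔞) ∧
    ((∀ 𝔞 : Ideal k, 𝔞.FG → InclusionCondition f 𝔞) →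
      ∀ 𝔞 : Ideal k, InclusionCondition f 𝔞) := by
  classical
  refine ⟨⟨fun hflat I hIfg => (key_iff f I hIfg).mpr (Module.Flat.iff_lift_lsmul_comp_subtype_injective.mp hflat hIfg),
    fun hall => Module.Flat.iff_lift_lsmul_comp_subtype_injective.mpr
      fun I hIfg => (key_iff f I hIfg).mp (hall I hIfg)⟩, ?_⟩
  intro hall 𝔞 h hh hcoeff
  set 𝔟 : Ideal k := Ideal.span (Set.range fun m : h.support => MvPolynomial.coeff m h) with h𝔟
  have h𝔟fg : 𝔟.FG := Submodule.fg_span (Set.finite_range _)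
  have h𝔟le : 𝔟 ≤ 𝔞 := by
    rw [h𝔟, Ideal.span_le]
    rintro _ ⟨m, rfl⟩
    exact hcoeff m
  have hcoeff𝔟 : ∀ m, MvPolynomial.coeff m h ∈ 𝔟 := by
    intro m
    by_cases hm : m ∈ h.support
    · exact Ideal.subset_span ⟨⟨m, hm⟩, rfl⟩
    · rw [MvPolynomial.notMem_support_iff.mp hm]
      exact 𝔟.zero_mem
  obtain ⟨v, hv, hveq⟩ := hall 𝔟 h𝔟fg h hh hcoeff𝔟
  exact ⟨v, fun i m => h𝔟le (hv i m), hveq⟩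
end
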